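/- Let p ∈ (10/3, 6), a > 0. For all u ∈ H¹(ℝ³) and θ ∈ ℝ, E(u) ≥ E(κ(u, θ)) + (2(1 - e^{3(p-2)θ/2})/(3(p-2))) P(u) + (h₁(θ)/(6(p-2))) ‖∇u‖²_{L²}, where h₁(θ) = 4 e^{3(p-2)θ/2} - 3(p-2) e^{2θ} + 3p - 10, κ(u,θ)(x) = e^{3θ/2} u(e^{θ}x), and E, P are the energy and Pohozaev functionals of the Schrödinger–Bopp–Podolsky equation. -/

import Mathlib

open MeasureTheory Real Filter Set

noncomputable section

abbrev Ω3 := EuclideanSpace ℝ (Fin 3)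

/-- The squared L² norm of the gradient. -/
def gradSq (u : Ω3 → ℝ) : ℝ := ∫ x, ‖fderiv ℝ u x‖ ^ 2

/-- A double (nonlocal) integral with kernel `K` of the distance. -/
def dblInt (K : ℝ → ℝ) (u : Ω3 → ℝ) : ℝ :=
  ∫ x, ∫ y, K (‖x - y‖) * (u x) ^ 2 * (u y) ^ 2

/-- The Bopp–Podolsky kernel `(1 - e^{-r/a})/r`. -/
def Kbp (a r : ℝ) : ℝ := (1 - exp (-r / a)) / r

/-- `∫ |u|^p`. -/
def lpInt (u : Ω3 → ℝ) (p : ℝ) : ℝ := ∫ x, |u x| ^ p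

/-- The Schrödinger–Bopp–Podolsky energy functional. -/
def Ebp (a p : ℝ) (u : Ω3 → ℝ) : ℝ :=
  (1/2) * gradSq u + (1/4) * dblInt (Kbp a) u - (1/p) * lpInt u p

/-- The Pohozaev functional. -/
def Pbp (a p : ℝ) (u : Ω3 → ℝ) : ℝ :=
  gradSq u + (1/4) * dblInt (Kbp a) u
    - (1/(4*a)) * dblInt (fun r => exp (-r / a)) u
    - (3*(p-2)/(2*p)) * lpInt u p

/-- The L²-norm preserving dilation `κ(u,θ)(x) = e^{3θ/2} u(e^{θ} x)`. -/
def scl (θ : ℝ) (u : Ω3 → ℝ) : Ω3 → ℝ := fun x => exp (3*θ/2) * u (exp θ • x)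

/-- Membership in `H¹(ℝ³)`. -/
def H1 (u : Ω3 → ℝ) : Prop :=
  MemLp u 2 volume ∧ MemLp (fun x => ‖fderiv ℝ u x‖) 2 volume

/-!
Writing `μ = 3(p-2)/2 ≥ 1` and `φ(x) = (1 - e^{-x})/x`, the dilation scales `‖∇u‖²` by `e^{2θ}`,
`∫|u|^p` by `e^{μθ}`, and turns the Bopp–Podolsky kernel `φ(r/a)/a` into `φ(e^{-θ}r/a)/a`.
After this the gradient and `L^p` terms cancel identically, and the inequality is the double
integral, against `u(x)²u(y)²`, of the pointwise kernel bound
`φ(e^{-θ}x) - φ(x) ≤ ((e^{μθ} - 1)/μ) (φ(x) - e^{-x})` (the positivity of `h₂`).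
Both sides vanish at `θ = 0`, and the θ-derivative of their difference is
`(e^{μθ} m(x) - e^{θ} m(e^{-θ}x))/x` with `m(y) = 1 - e^{-y}(1+y)` nonnegative and nondecreasing,
so it has the sign of `θ`.
-/

theorem integral_comp_exp_smul {E : Type*} [NormedAddCommGroup E] [NormedSpace ℝ E]
    [MeasurableSpace E] [BorelSpace E] [FiniteDimensional ℝ E] (μ : Measure E)
    [μ.IsAddHaarMeasure] (f : E → ℝ) (θ : ℝ) :
    ∫ x, f (exp θ • x) ∂μ = exp (-(Module.finrank ℝ E * θ)) * ∫ x, f x ∂μ := by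
  rw [Measure.integral_comp_smul, smul_eq_mul, ← exp_nat_mul, ← exp_neg,
    abs_of_pos (exp_pos _)]

theorem integral_Ω3_comp_exp_smul (f : Ω3 → ℝ) (θ : ℝ) :
    ∫ x, f (exp θ • x) = exp (-(3 * θ)) * ∫ x, f x := by
  simp [integral_comp_exp_smul]

theorem norm_fderiv_scl (θ : ℝ) (u : Ω3 → ℝ) (x : Ω3) :
    ‖fderiv ℝ (scl θ u) x‖ = exp (5 * θ / 2) * ‖fderiv ℝ u (exp θ • x)‖ := by
  have h : scl θ u = exp (3 * θ / 2) • fun x => u (exp θ • x) := rfl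
  rw [h, fderiv_const_smul_field, Pi.smul_apply, fderiv_comp_smul, smul_smul, norm_smul,
    Real.norm_of_nonneg (by positivity), ← exp_add]
  ring_nf

theorem gradSq_scl (θ : ℝ) (u : Ω3 → ℝ) : gradSq (scl θ u) = exp (2 * θ) * gradSq u := by
  simp_rw [gradSq, norm_fderiv_scl, mul_pow, ← exp_nat_mul, integral_const_mul,
    integral_Ω3_comp_exp_smul (fun y => ‖fderiv ℝ u y‖ ^ 2), ← mul_assoc, ← exp_add]
  ring_nf

theorem lpInt_scl (θ p : ℝ) (u : Ω3 → ℝ) :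
    lpInt (scl θ u) p = exp (3 * (p - 2) * θ / 2) * lpInt u p := by
  simp_rw [lpInt, scl, abs_mul, mul_rpow (abs_nonneg _) (abs_nonneg _), abs_exp, ← exp_mul,
    integral_const_mul, integral_Ω3_comp_exp_smul (fun y => |u y| ^ p), ← mul_assoc, ← exp_add]
  ring_nf

theorem dblInt_scl (K : ℝ → ℝ) (θ : ℝ) (u : Ω3 → ℝ) :
    dblInt K (scl θ u) = dblInt (fun r => K (exp (-θ) * r)) u := by
  set g : Ω3 → Ω3 → ℝ := fun x y => K (exp (-θ) * ‖x - y‖) * u x ^ 2 * u y ^ 2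
  have hg : ∀ x y : Ω3, K ‖x - y‖ * scl θ u x ^ 2 * scl θ u y ^ 2
      = exp (6 * θ) * g (exp θ • x) (exp θ • y) := by
    intro x y
    have hexp : exp (3 * θ / 2) ^ 2 * exp (3 * θ / 2) ^ 2 = exp (6 * θ) := by
      rw [← exp_nat_mul, ← exp_add]; ring_nf
    simp only [g, scl, ← smul_sub, norm_smul, Real.norm_of_nonneg (exp_pos θ).le, ← mul_assoc,
      ← exp_add, neg_add_cancel, exp_zero, one_mul, ← hexp]
    ring
  calc dblInt K (scl θ u) = ∫ x, exp (6 * θ) * ∫ y, g (exp θ • x) (exp θ • y) := by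
        simp only [dblInt, hg, integral_const_mul]
    _ = ∫ x, exp (3 * θ) * ∫ y, g (exp θ • x) y := by
        simp only [integral_Ω3_comp_exp_smul (g (exp θ • _)), ← mul_assoc, ← exp_add]
        ring_nf
    _ = dblInt (fun r => K (exp (-θ) * r)) u := by
        rw [integral_const_mul, integral_Ω3_comp_exp_smul (fun x => ∫ y, g x y), ← mul_assoc,
          ← exp_add, add_neg_cancel, exp_zero, one_mul]
        rfl

def dblIntegrand (K : ℝ → ℝ) (u : Ω3 → ℝ) (q : Ω3 × Ω3) : ℝ :=
  K ‖q.1 - q.2‖ * u q.1 ^ 2 * u q.2 ^ 2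

theorem integrable_dblIntegrand {K : ℝ → ℝ} {u : Ω3 → ℝ} {C : ℝ} (hu : MemLp u 2)
    (hK : Measurable K) (hKC : ∀ r, 0 ≤ r → |K r| ≤ C) :
    Integrable (dblIntegrand K u) (volume.prod volume) := by
  have hu2 := hu.integrable_sq
  refine ((hu2.mul_prod hu2).const_mul C).mono' ?_ (ae_of_all _ fun q => ?_)
  · exact ((hK.comp (continuous_fst.sub continuous_snd).norm.measurable).aestronglyMeasurable.mul
      (hu.aestronglyMeasurable.comp_fst.pow 2)).mul (hu.aestronglyMeasurable.comp_snd.pow 2)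
  · rw [dblIntegrand, Real.norm_eq_abs, abs_mul, abs_mul, abs_pow, abs_pow, sq_abs, sq_abs,
      mul_assoc]
    exact mul_le_mul_of_nonneg_right (hKC _ (norm_nonneg _)) (by positivity)

theorem dblInt_eq_integral_prod {K : ℝ → ℝ} {u : Ω3 → ℝ}
    (h : Integrable (dblIntegrand K u) (volume.prod volume)) :
    dblInt K u = ∫ q, dblIntegrand K u q ∂(volume.prod volume) :=
  (integral_prod _ h).symm

theorem ae_fst_ne_snd : ∀ᵐ q ∂(volume.prod volume : Measure (Ω3 × Ω3)), q.1 ≠ q.2 := by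
  refine (Measure.ae_prod_iff_ae_ae ?_).2 (ae_of_all _ fun x => ?_)
  · exact (isClosed_eq continuous_fst continuous_snd).isOpen_compl.measurableSet
  · simpa [eq_comm] using volume.ae_ne x

theorem Kbp_eq_div {a : ℝ} (ha : a ≠ 0) (r : ℝ) : Kbp a r = Kbp 1 (r / a) / a := by
  rcases eq_or_ne r 0 with rfl | hr
  · simp [Kbp]
  · simp only [Kbp, div_one, neg_div]
    field_simp

theorem measurable_Kbp (a : ℝ) : Measurable (Kbp a) := by
  unfold Kbp; fun_prop

theorem abs_Kbp_one_le {y : ℝ} (hy : 0 ≤ y) : |Kbp 1 y| ≤ 1 := by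
  have h₁ : 0 ≤ 1 - exp (-y) := by simpa using exp_le_one_iff.2 (neg_nonpos.2 hy)
  have h₂ : 1 - exp (-y) ≤ y := by linarith [add_one_le_exp (-y)]
  rw [Kbp, div_one, abs_of_nonneg (div_nonneg h₁ hy)]
  exact div_le_one_of_le₀ h₂ hy

theorem abs_Kbp_le {a r : ℝ} (ha : 0 < a) (hr : 0 ≤ r) : |Kbp a r| ≤ a⁻¹ := by
  rw [Kbp_eq_div ha.ne', abs_div, abs_of_pos ha, div_eq_mul_inv]
  exact mul_le_of_le_one_left (inv_nonneg.2 ha.le) (abs_Kbp_one_le (div_nonneg hr ha.le))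

/-- `-y² φ'(y)` for the kernel profile `φ = Kbp 1`. -/
def bpDefect (y : ℝ) : ℝ := 1 - exp (-y) * (1 + y)

theorem hasDerivAt_bpDefect (y : ℝ) : HasDerivAt bpDefect (y * exp (-y)) y := by
  have := (((hasDerivAt_neg y).exp).mul ((hasDerivAt_id' y).const_add 1)).const_sub 1
  exact this.congr_deriv (by ring)

theorem monotoneOn_bpDefect : MonotoneOn bpDefect (Ici 0) :=
  monotoneOn_of_hasDerivWithinAt_nonneg (convex_Ici 0)
    (fun y _ => (hasDerivAt_bpDefect y).continuousAt.continuousWithinAt)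
    (fun y _ => (hasDerivAt_bpDefect y).hasDerivWithinAt)
    (fun y hy => by rw [interior_Ici] at hy; exact mul_nonneg (le_of_lt hy) (exp_pos _).le)

theorem bpDefect_nonneg {y : ℝ} (hy : 0 ≤ y) : 0 ≤ bpDefect y := by
  simpa [bpDefect] using monotoneOn_bpDefect (mem_Ici.2 le_rfl) (mem_Ici.2 hy) hy

theorem hasDerivAt_Kbp_one {y : ℝ} (hy : y ≠ 0) :
    HasDerivAt (Kbp 1) ((exp (-y) - Kbp 1 y) / y) y := by
  have := ((((hasDerivAt_neg y).div_const 1).exp).const_sub 1).div (hasDerivAt_id' y) hy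
  refine this.congr_deriv ?_
  simp only [Kbp, div_one]
  field_simp

theorem Kbp_one_comp_exp_neg_sub_le {μ x : ℝ} (hμ : 1 ≤ μ) (hx : 0 < x) (θ : ℝ) :
    Kbp 1 (exp (-θ) * x) - Kbp 1 x ≤ (exp (μ * θ) - 1) / μ * (Kbp 1 x - exp (-x)) := by
  set F : ℝ → ℝ := fun θ => (exp (μ * θ) - 1) / μ * (Kbp 1 x - exp (-x)) - Kbp 1 (exp (-θ) * x)
  have hF : ∀ θ, HasDerivAt F
      ((exp (μ * θ) * bpDefect x - exp θ * bpDefect (exp (-θ) * x)) / x) θ := by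
    intro θ
    have hs : exp (-θ) * x ≠ 0 := by positivity
    have hin : HasDerivAt (fun θ => exp (-θ) * x) (-(exp (-θ) * x)) θ :=
      ((hasDerivAt_neg' θ).exp.mul_const x).congr_deriv (by ring)
    have := ((((hasDerivAt_id' θ).const_mul μ).exp.sub_const 1).div_const μ).mul_const
      (Kbp 1 x - exp (-x)) |>.sub ((hasDerivAt_Kbp_one hs).comp θ hin)
    refine this.congr_deriv ?_
    have hμ0 : μ ≠ 0 := by positivity
    simp only [Kbp, bpDefect, div_one, exp_neg]
    field_simp
    ring
  have hmin : IsMinOn F univ 0 := by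
    refine isMinOn_univ_of_deriv (hF 0).continuousAt
      (fun θ _ => (hF θ).differentiableAt.differentiableWithinAt)
      (fun θ _ => (hF θ).differentiableAt.differentiableWithinAt) (fun θ hθ => ?_)
      (fun θ hθ => ?_) <;> rw [(hF θ).deriv]
    · have hθ : θ < 0 := hθ
      have hm : bpDefect x ≤ bpDefect (exp (-θ) * x) :=
        monotoneOn_bpDefect (mem_Ici.2 hx.le) (mem_Ici.2 (by positivity))
          (le_mul_of_one_le_left hx.le (one_le_exp (by linarith)))
      have he : exp (μ * θ) ≤ exp θ := exp_le_exp.2 (by nlinarith)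
      refine div_nonpos_of_nonpos_of_nonneg ?_ hx.le
      nlinarith [bpDefect_nonneg hx.le, exp_pos θ]
    · have hθ : 0 < θ := hθ
      have hm : bpDefect (exp (-θ) * x) ≤ bpDefect x :=
        monotoneOn_bpDefect (mem_Ici.2 (by positivity)) (mem_Ici.2 hx.le)
          (mul_le_of_le_one_left hx.le (exp_le_one_iff.2 (by linarith)))
      have he : exp θ ≤ exp (μ * θ) := exp_le_exp.2 (by nlinarith)
      refine div_nonneg ?_ hx.le
      nlinarith [bpDefect_nonneg (by positivity : 0 ≤ exp (-θ) * x), exp_pos θ]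
  have h0 : F 0 ≤ F θ := hmin (mem_univ θ)
  simp only [F, mul_zero, exp_zero, sub_self, zero_div, zero_mul, neg_zero, one_mul] at h0
  linarith

theorem Kbp_comp_exp_neg_sub_le {a μ r : ℝ} (ha : 0 < a) (hμ : 1 ≤ μ) (hr : 0 < r) (θ : ℝ) :
    Kbp a (exp (-θ) * r) - Kbp a r ≤ (exp (μ * θ) - 1) / μ * (Kbp a r - exp (-r / a) / a) := by
  have h := Kbp_one_comp_exp_neg_sub_le hμ (div_pos hr ha) θ
  rw [Kbp_eq_div ha.ne', Kbp_eq_div ha.ne', mul_div_assoc, neg_div]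
  calc Kbp 1 (exp (-θ) * (r / a)) / a - Kbp 1 (r / a) / a
      = (Kbp 1 (exp (-θ) * (r / a)) - Kbp 1 (r / a)) / a := by ring
    _ ≤ ((exp (μ * θ) - 1) / μ * (Kbp 1 (r / a) - exp (-(r / a)))) / a :=
        div_le_div_of_nonneg_right h ha.le
    _ = _ := by ring

theorem dblInt_Kbp_scl_le {a μ : ℝ} (ha : 0 < a) (hμ : 1 ≤ μ) {u : Ω3 → ℝ} (hu : MemLp u 2)
    (θ : ℝ) :
    dblInt (Kbp a) (scl θ u) ≤ dblInt (Kbp a) u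
      + (exp (μ * θ) - 1) / μ * (dblInt (Kbp a) u - dblInt (fun r => exp (-r / a)) u / a) := by
  have hθ := integrable_dblIntegrand hu (K := fun r => Kbp a (exp (-θ) * r))
    ((measurable_Kbp a).comp (measurable_const_mul _)) (fun r hr => abs_Kbp_le ha (mul_nonneg (exp_pos (-θ)).le hr))
  have hK := integrable_dblIntegrand hu (measurable_Kbp a) (fun r hr => abs_Kbp_le ha hr)
  have he := integrable_dblIntegrand hu (K := fun r => exp (-r / a)) (by fun_prop)
    (fun r hr => by rw [abs_exp, exp_le_one_iff, neg_div, neg_nonpos]; positivity)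
  have hdiff : Integrable (fun q => (exp (μ * θ) - 1) / μ *
      (dblIntegrand (Kbp a) u q - dblIntegrand (fun r => exp (-r / a)) u q / a))
      (volume.prod volume) :=
    (hK.sub (he.div_const a)).const_mul _
  rw [dblInt_scl, dblInt_eq_integral_prod hθ, dblInt_eq_integral_prod hK,
    dblInt_eq_integral_prod he, ← integral_div, ← integral_sub hK (he.div_const a),
    ← integral_const_mul, ← integral_add hK hdiff]
  refine integral_mono_ae hθ (hK.add hdiff) ?_
  filter_upwards [ae_fst_ne_snd] with q hq
  have hr : 0 < ‖q.1 - q.2‖ := norm_pos_iff.2 (sub_ne_zero.2 hq)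
  have h := mul_le_mul_of_nonneg_right (Kbp_comp_exp_neg_sub_le ha hμ hr θ)
    (by positivity : 0 ≤ u q.1 ^ 2 * u q.2 ^ 2)
  simp only [dblIntegrand]
  linear_combination h

theorem energy_scaling_inequality_general (p a : ℝ) (hp₁ : 10/3 < p) (ha : 0 < a) :
    ∀ (u : Ω3 → ℝ), H1 u → ∀ θ : ℝ,
      Ebp a p (scl θ u) + (2*(1 - exp (3*(p-2)*θ/2))/(3*(p-2))) * Pbp a p u
        + ((4 * exp (3*(p-2)*θ/2) - 3*(p-2) * exp (2*θ) + 3*p - 10)/(6*(p-2))) * gradSq u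
      ≤ Ebp a p u := by
  intro u hu θ
  have hD := dblInt_Kbp_scl_le ha (μ := 3 * (p - 2) / 2) (by linarith) hu.1 θ
  have hp : p ≠ 0 := by linarith
  have hp2 : p - 2 ≠ 0 := by linarith
  rw [show 3 * (p - 2) / 2 * θ = 3 * (p - 2) * θ / 2 by ring] at hD
  simp only [Ebp, Pbp, gradSq_scl, lpInt_scl]
  -- the gradient and `L^p` terms cancel exactly, leaving `1/4` of the slack in `hD`
  linear_combination (norm := skip) (1 / 4) * hD
  refine le_of_eq ?_
  field_simp
  ring

/-- For all `u ∈ H¹(ℝ³)` and `θ ∈ ℝ`: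
`E(u) ≥ E(κ(u,θ)) + (2(1 - e^{3(p-2)θ/2})/(3(p-2)))P(u) + (h₁(θ)/(6(p-2)))‖∇u‖²`,
with `h₁(θ) = 4 e^{3(p-2)θ/2} - 3(p-2)e^{2θ} + 3p - 10`. -/
theorem energy_scaling_inequality (p a : ℝ) (hp₁ : 10/3 < p) (hp₂ : p < 6) (ha : 0 < a) :
    ∀ (u : Ω3 → ℝ), H1 u → ∀ θ : ℝ,
      Ebp a p (scl θ u) + (2*(1 - exp (3*(p-2)*θ/2))/(3*(p-2))) * Pbp a p u
        + ((4 * exp (3*(p-2)*θ/2) - 3*(p-2) * exp (2*θ) + 3*p - 10)/(6*(p-2))) * gradSq u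
      ≤ Ebp a p u :=
  energy_scaling_inequality_general p a hp₁ ha
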